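/- arXiv:2202.01463 — 7 statements merged into one kernel-verified Lean document; each statement's English description precedes it below -/
import Mathlib

section
/- Let b > 0, let 𝓜 be a finite set, and let p = (p_m)_{m∈𝓜} be a probability vector with 0 < p_m < b for every m ∈ 𝓜. Let 𝒢_b denote the set of functions g : (1/b, ∞) → (0, ∞) such that g is nondecreasing on (1/b, ∞) and x ↦ x·g(1/x) is nondecreasing on (0, b). Then for every τ ∈ (0, b), 𝔠_p(τ) = inf_{g ∈ 𝒢_b} ( ∑_{m∈𝓜} p_m·g(1/p_m) ) / g(1/τ), and the infimum is attained (e.g. by g(x) = min(1, τx)). -/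
/-- For a probability vector `p` on a finite set `𝓜` with `0 < p_m < b` and `τ ∈ (0, b)`,
the complexity `𝔠_p(τ) = ∑_m min(p_m, τ)` equals the infimum over all `g ∈ 𝒢_b`
(positive, nondecreasing functions on `(1/b, ∞)` such that `x ↦ x·g(1/x)` is nondecreasing
on `(0, b)`) of `(∑_m p_m·g(1/p_m)) / g(1/τ)`, and the infimum is attained. -/
theorem complexity_eq_inf_entropy (b : ℝ) (hb : 0 < b) {M : Type*} [Fintype M]
    (p : M → ℝ) (hp0 : ∀ m, 0 < p m) (hpb : ∀ m, p m < b) (hp1 : ∑ m, p m = 1)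
    (τ : ℝ) (hτ0 : 0 < τ) (hτb : τ < b) :
    IsLeast
      {r : ℝ | ∃ g : ℝ → ℝ,
        (∀ x, 1 / b < x → 0 < g x) ∧
        (∀ x y, 1 / b < x → x ≤ y → g x ≤ g y) ∧
        (∀ x y, 0 < x → x ≤ y → y < b → x * g (1 / x) ≤ y * g (1 / y)) ∧
        r = (∑ m, p m * g (1 / p m)) / g (1 / τ)}
      (∑ m, min (p m) τ) := by
  constructor
  · refine ⟨fun x => min 1 (τ * x), ?_, ?_, ?_, ?_⟩
    · intro x hx
      have hx0 : 0 < x := lt_trans (by positivity) hx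
      exact lt_min one_pos (by positivity)
    · intro x y hx hxy
      exact min_le_min le_rfl (by nlinarith)
    · intro x y hx hxy hyb
      have hy0 : 0 < y := lt_of_lt_of_le hx hxy
      have h1 : x * min 1 (τ * (1 / x)) = min x τ := by
        rw [mul_min_of_nonneg _ _ hx.le, mul_one, mul_comm τ, ← mul_assoc,
          mul_one_div, div_self hx.ne', one_mul]
      have h2 : y * min 1 (τ * (1 / y)) = min y τ := by
        rw [mul_min_of_nonneg _ _ hy0.le, mul_one, mul_comm τ, ← mul_assoc,
          mul_one_div, div_self hy0.ne', one_mul]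
      rw [h1, h2]
      exact min_le_min hxy le_rfl
    · simp only [mul_one_div, div_self hτ0.ne', min_self, div_one]
      refine Finset.sum_congr rfl fun m _ => ?_
      have hm := hp0 m
      rw [mul_min_of_nonneg _ _ hm.le, mul_one,
        mul_div_cancel₀ _ hm.ne']
  · rintro r ⟨g, hpos, hmono, hxg, rfl⟩
    have hτg : 0 < g (1 / τ) :=
      hpos _ (by rw [div_lt_div_iff₀ hb hτ0]; nlinarith)
    rw [le_div_iff₀ hτg, Finset.sum_mul]
    refine Finset.sum_le_sum fun m _ => ?_
    have hm := hp0 m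
    rcases le_total (p m) τ with h | h
    · rw [min_eq_left h]
      have : g (1 / τ) ≤ g (1 / p m) := by
        refine hmono _ _ (by rw [div_lt_div_iff₀ hb hτ0]; nlinarith) ?_
        exact one_div_le_one_div_of_le hm h
      nlinarith
    · rw [min_eq_right h]
      exact hxg τ (p m) hτ0 h (hpb m)
end

section
/- Let p = (p_m)_{m∈𝓜} and q = (q_{m'})_{m'∈𝓜'} be probability vectors on finite sets 𝓜 and 𝓜', and let p⊗q be the product probability vector on 𝓜×𝓜' defined by (p⊗q)_{(m,m')} = p_m·q_{m'}. Then for every τ ∈ (0,1), 𝔠_{p⊗q}(τ) ≤ 𝔠_p( 𝔠_q(τ) ). -/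
/-- For probability vectors `p` and `q` on finite sets `𝓜` and `𝓜'`, the complexity of
the product distribution satisfies `𝔠_{p⊗q}(τ) ≤ 𝔠_p(𝔠_q(τ))` for every `τ ∈ (0,1)`. -/
theorem complexity_tensor_product {M M' : Type*} [Fintype M] [Fintype M']
    (p : M → ℝ) (hp0 : ∀ m, 0 ≤ p m) (hp1 : ∑ m, p m = 1)
    (q : M' → ℝ) (hq0 : ∀ m', 0 ≤ q m') (hq1 : ∑ m', q m' = 1)
    (τ : ℝ) (hτ0 : 0 < τ) (hτ1 : τ < 1) :
    ∑ x : M × M', min (p x.1 * q x.2) τ ≤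
      ∑ m, min (p m) (∑ m', min (q m') τ) := by
  rw [Fintype.sum_prod_type]
  apply Finset.sum_le_sum
  intro m _
  have hpm1 : p m ≤ 1 := by
    rw [← hp1]
    exact Finset.single_le_sum (fun i _ => hp0 i) (Finset.mem_univ m)
  apply le_min
  · calc ∑ m', min (p m * q m') τ ≤ ∑ m', p m * q m' :=
          Finset.sum_le_sum fun i _ => min_le_left _ _
      _ = p m := by rw [← Finset.mul_sum, hq1, mul_one]
  · exact Finset.sum_le_sum fun i _ =>
      min_le_min (mul_le_of_le_one_left (hq0 i) hpm1) le_rfl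
end

section
/- Let d and n be positive integers, let p = (p_m)_{m∈𝓜} be a probability vector on 𝓜 = {0,1}^d, and let τ be a real number with τ ≥ 1/n. Let M_1, …, M_n be i.i.d. random elements of 𝓜 with distribution p, and for each m ∈ 𝓜 let N_m = #{ i ∈ {1,…,n} : M_i = m }. Then E[ ∑_{m∈𝓜} p_m·( d·1_{N_m > nτ}/N_m + 1_{N_m ≤ nτ} ) ] ≤ 5·max(1, d/(n·τ))·𝔠_p(τ). -/
/-!
Fix a pattern `m`, write `q = p_m`, and view `N_m` as a sum of `n` independent `{0,1}`-valued
indicators of mean `q`. If `q ≤ τ`, the bracket is pointwise at most `max 1 (d / (n τ))`.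
If `q > τ`, bound `d 1_{N > nτ} / N` by `2d / (N + 1)`: leaving out the `j`-th indicator,
independence gives `q E[1 / (N + 1)] ≤ E[X_j / N]`, and summing over `j` yields
`n q E[1 / (N + 1)] ≤ 1`. The lower tail `P(N ≤ nτ)` only matters when `q > 3τ`, and then
Chebyshev with `Var N ≤ n q` and `n q - n τ ≥ 2 n q / 3` gives `q P(N ≤ nτ) ≤ 3τ`.
-/

open MeasureTheory ProbabilityTheory Finset

noncomputable def patternLoss (d : ℕ) (t s : ℝ) : ℝ :=
  (if t < s then (d : ℝ) / s else 0) + (if s ≤ t then 1 else 0)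

section patternLoss

variable {d : ℕ} {t s : ℝ}

theorem measurable_patternLoss : Measurable (patternLoss d t) := by
  unfold patternLoss
  exact (Measurable.ite measurableSet_Ioi (measurable_const.div measurable_id) measurable_const).add
    (Measurable.ite measurableSet_Iic measurable_const measurable_const)

theorem patternLoss_nonneg (ht : 0 ≤ t) : 0 ≤ patternLoss d t s := by
  unfold patternLoss
  split_ifs <;> first | positivity | (have : 0 < s := by linarith); positivity

theorem patternLoss_le_max (ht : 0 < t) : patternLoss d t s ≤ max 1 (d / t) := by
  unfold patternLoss
  split_ifs with h₁ h₂ h₂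
  · linarith
  · simpa using le_max_of_le_right (div_le_div_of_nonneg_left (Nat.cast_nonneg d) ht h₁.le)
  · simp
  · linarith

theorem patternLoss_le (ht : 1 ≤ t) (hs : 0 ≤ s) :
    patternLoss d t s ≤ 2 * d * (s + 1)⁻¹ + (if s ≤ t then 1 else 0) := by
  unfold patternLoss
  gcongr
  split_ifs with h
  · rw [← div_eq_mul_inv, div_le_div_iff₀ (by linarith) (by linarith)]
    nlinarith [(Nat.cast_nonneg d : (0 : ℝ) ≤ d)]
  · positivity

variable {Ω : Type*} [MeasurableSpace Ω] {μ : Measure Ω} [IsFiniteMeasure μ] {f : Ω → ℝ}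

theorem integrable_patternLoss_comp (ht : 0 < t) (hf : Measurable f) :
    Integrable (fun ω => patternLoss d t (f ω)) μ :=
  .of_bound (measurable_patternLoss.comp hf).aestronglyMeasurable (max 1 (d / t))
    (ae_of_all _ fun ω => by
      rw [Real.norm_of_nonneg (patternLoss_nonneg ht.le)]
      exact patternLoss_le_max ht)

theorem integrable_inv_add_one (hf : Measurable f) (hf0 : ∀ ω, 0 ≤ f ω) :
    Integrable (fun ω => (f ω + 1)⁻¹) μ :=
  .of_bound (hf.add_const 1).inv.aestronglyMeasurable 1 (ae_of_all _ fun ω => by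
    rw [Real.norm_of_nonneg (by have := hf0 ω; positivity)]
    exact inv_le_one_of_one_le₀ (by linarith [hf0 ω]))

theorem integral_patternLoss_comp_le (ht : 1 ≤ t) (hf : Measurable f) (hf0 : ∀ ω, 0 ≤ f ω) :
    ∫ ω, patternLoss d t (f ω) ∂μ ≤ 2 * d * ∫ ω, (f ω + 1)⁻¹ ∂μ + μ.real {ω | f ω ≤ t} := by
  have hs : MeasurableSet {ω | f ω ≤ t} := measurableSet_le hf measurable_const
  have hint_inv := (integrable_inv_add_one (μ := μ) hf hf0).const_mul (2 * d)
  have hint_ind : Integrable (fun ω => if f ω ≤ t then (1 : ℝ) else 0) μ :=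
    .of_bound (Measurable.ite hs measurable_const measurable_const).aestronglyMeasurable 1
      (ae_of_all _ fun ω => by split_ifs <;> simp)
  have hind : ∫ ω, (if f ω ≤ t then (1 : ℝ) else 0) ∂μ = μ.real {ω | f ω ≤ t} := by
    rw [← integral_indicator_one hs]
    simp [Set.indicator_apply]
  rw [← hind, ← integral_const_mul, ← integral_add hint_inv hint_ind]
  exact integral_mono (integrable_patternLoss_comp (by linarith) hf) (hint_inv.add hint_ind)
    fun ω => patternLoss_le ht (hf0 ω)

end patternLoss

section BernoulliSum

variable {Ω : Type*} [MeasurableSpace Ω] {μ : Measure Ω} [IsProbabilityMeasure μ]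

theorem variance_le_integral_of_zero_or_one {Y : Ω → ℝ} (hY : AEStronglyMeasurable Y μ)
    (hY01 : ∀ ω, Y ω = 0 ∨ Y ω = 1) : variance Y μ ≤ μ[Y] := by
  have hsq : Y ^ 2 = Y := funext fun ω => by rcases hY01 ω with h | h <;> simp [h]
  simpa only [hsq] using variance_le_expectation_sq hY

variable {ι : Type*} [Fintype ι] {X : ι → Ω → ℝ}

theorem integral_mul_inv_sum_add_one_le (hX : ∀ i, Measurable (X i))
    (hX01 : ∀ i ω, X i ω = 0 ∨ X i ω = 1) (hind : iIndepFun X μ) (j : ι) :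
    μ[X j] * ∫ ω, (∑ i, X i ω + 1)⁻¹ ∂μ ≤ ∫ ω, X j ω * (∑ i, X i ω)⁻¹ ∂μ := by
  classical
  have hX0 : ∀ i ω, 0 ≤ X i ω := fun i ω => by rcases hX01 i ω with h | h <;> simp [h]
  set T : Ω → ℝ := fun ω => ∑ i ∈ univ.erase j, X i ω
  have hT0 : ∀ ω, 0 ≤ T ω := fun ω => sum_nonneg fun i _ => hX0 i ω
  have hTS : ∀ ω, ∑ i, X i ω = T ω + X j ω := fun ω => (sum_erase_add _ _ (mem_univ j)).symm
  have hTm : Measurable T := Finset.measurable_sum _ fun i _ => hX i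
  have hindep : IndepFun (X j) (fun ω => (T ω + 1)⁻¹) μ := by
    have := (hind.indepFun_finsetSum_of_notMem hX (notMem_erase j univ)).symm.comp
      (φ := id) (ψ := fun x : ℝ => (x + 1)⁻¹) measurable_id (by fun_prop)
    convert this using 1 <;> ext ω <;> simp [T]
  calc μ[X j] * ∫ ω, (∑ i, X i ω + 1)⁻¹ ∂μ
      ≤ μ[X j] * ∫ ω, (T ω + 1)⁻¹ ∂μ := by
        refine mul_le_mul_of_nonneg_left (integral_mono (integrable_inv_add_one
          (Finset.measurable_sum _ fun i _ => hX i) fun ω => sum_nonneg fun i _ => hX0 i ω)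
          (integrable_inv_add_one hTm hT0) fun ω => ?_) (integral_nonneg (hX0 j))
        gcongr
        · linarith [hT0 ω]
        · linarith [hTS ω, hX0 j ω]
    _ = ∫ ω, X j ω * (T ω + 1)⁻¹ ∂μ :=
        (hindep.integral_fun_mul_eq_mul_integral (hX j).aestronglyMeasurable
          (integrable_inv_add_one hTm hT0).aestronglyMeasurable).symm
    _ = ∫ ω, X j ω * (∑ i, X i ω)⁻¹ ∂μ := by
        -- `T + 1 = ∑ i, X i` wherever `X j ≠ 0`
        congr with ω
        rcases hX01 j ω with h | h <;> simp [hTS, h]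

theorem sum_integral_mul_inv_sum_add_one_le_one (hX : ∀ i, Measurable (X i))
    (hX01 : ∀ i ω, X i ω = 0 ∨ X i ω = 1) (hind : iIndepFun X μ) :
    (∑ i, μ[X i]) * ∫ ω, (∑ i, X i ω + 1)⁻¹ ∂μ ≤ 1 := by
  have hX0 : ∀ i ω, 0 ≤ X i ω := fun i ω => by rcases hX01 i ω with h | h <;> simp [h]
  have hSm : Measurable fun ω => ∑ i, X i ω := Finset.measurable_sum _ fun i _ => hX i
  have hS0 : ∀ ω, 0 ≤ ∑ i, X i ω := fun ω => sum_nonneg fun i _ => hX0 i ω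
  have hterm0 : ∀ j ω, 0 ≤ X j ω * (∑ i, X i ω)⁻¹ := fun j ω => by
    have := hX0 j ω; have := hS0 ω; positivity
  have hsum_le : ∀ ω, ∑ j, X j ω * (∑ i, X i ω)⁻¹ ≤ 1 := fun ω => by
    rw [← sum_mul]; exact mul_inv_le_one
  calc (∑ i, μ[X i]) * ∫ ω, (∑ i, X i ω + 1)⁻¹ ∂μ
      ≤ ∑ j, ∫ ω, X j ω * (∑ i, X i ω)⁻¹ ∂μ := by
        rw [sum_mul]
        exact sum_le_sum fun j _ => integral_mul_inv_sum_add_one_le hX hX01 hind j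
    _ = ∫ ω, ∑ j, X j ω * (∑ i, X i ω)⁻¹ ∂μ := by
        refine (integral_finsetSum _ fun j _ => ?_).symm
        refine .of_bound ((hX j).mul hSm.inv).aestronglyMeasurable 1 (ae_of_all _ fun ω => ?_)
        rw [Real.norm_of_nonneg (hterm0 j ω)]
        exact (single_le_sum (fun i _ => hterm0 i ω) (mem_univ j)).trans (hsum_le ω)
    _ ≤ ∫ _, 1 ∂μ := integral_mono_of_nonneg (ae_of_all _ fun ω => sum_nonneg fun j _ =>
          hterm0 j ω) (integrable_const 1) (ae_of_all _ hsum_le)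
    _ = 1 := by simp

theorem measureReal_sum_le_le (hX : ∀ i, Measurable (X i))
    (hX01 : ∀ i ω, X i ω = 0 ∨ X i ω = 1) (hind : iIndepFun X μ) {t : ℝ}
    (ht : t < ∑ i, μ[X i]) :
    μ.real {ω | ∑ i, X i ω ≤ t} ≤ (∑ i, μ[X i]) / (∑ i, μ[X i] - t) ^ 2 := by
  have hmem : ∀ i, MemLp (X i) 2 μ := fun i =>
    .of_bound (hX i).aestronglyMeasurable 1 (ae_of_all _ fun ω => by
      rcases hX01 i ω with h | h <;> simp [h])
  have hES : ∫ ω, ∑ i, X i ω ∂μ = ∑ i, μ[X i] :=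
    integral_finsetSum _ fun i _ => (hmem i).integrable one_le_two
  have hvar : variance (∑ i, X i) μ ≤ ∑ i, μ[X i] := by
    rw [IndepFun.variance_sum (fun i _ => hmem i) fun i _ j _ hij => hind.indepFun hij]
    exact sum_le_sum fun i _ =>
      variance_le_integral_of_zero_or_one (hX i).aestronglyMeasurable (hX01 i)
  have hsub : {ω | ∑ i, X i ω ≤ t} ⊆ {ω | ∑ i, μ[X i] - t ≤ |(∑ i, X i) ω - μ[∑ i, X i]|} := by
    intro ω hω
    simp only [Set.mem_ofPred_eq, Finset.sum_apply] at hω ⊢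
    rw [hES, abs_sub_comm]
    exact (sub_le_sub_left hω _).trans (le_abs_self _)
  calc μ.real {ω | ∑ i, X i ω ≤ t}
      ≤ μ.real {ω | ∑ i, μ[X i] - t ≤ |(∑ i, X i) ω - μ[∑ i, X i]|} := measureReal_mono hsub
    _ ≤ variance (∑ i, X i) μ / (∑ i, μ[X i] - t) ^ 2 :=
        ENNReal.toReal_le_of_le_ofReal (div_nonneg (variance_nonneg _ _) (sq_nonneg _))
          (meas_ge_le_variance_div_sq (memLp_finsetSum' _ fun i _ => hmem i) (by linarith))
    _ ≤ (∑ i, μ[X i]) / (∑ i, μ[X i] - t) ^ 2 := by gcongr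

theorem mul_measureReal_sum_le_le {n : ℕ} {X : Fin n → Ω → ℝ} {q τ : ℝ} (hτ : 1 ≤ n * τ)
    (hX : ∀ i, Measurable (X i)) (hX01 : ∀ i ω, X i ω = 0 ∨ X i ω = 1) (hind : iIndepFun X μ)
    (hEX : ∀ i, μ[X i] = q) :
    q * μ.real {ω | ∑ i, X i ω ≤ n * τ} ≤ 3 * τ := by
  have hn : 0 < n := Nat.pos_of_ne_zero fun h => by norm_num [h] at hτ
  have hτ0 : 0 < τ := pos_of_mul_pos_right (by linarith) (Nat.cast_nonneg n)
  have hq0 : 0 ≤ q := hEX ⟨0, hn⟩ ▸ integral_nonneg fun ω => by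
    rcases hX01 ⟨0, hn⟩ ω with h | h <;> simp [h]
  have hES : ∑ i, μ[X i] = n * q := by simp [hEX]
  rcases le_or_gt q (3 * τ) with hq | hq
  · exact (mul_le_of_le_one_right hq0 measureReal_le_one).trans hq
  have hlt : (n : ℝ) * τ < ∑ i, μ[X i] := by rw [hES]; gcongr; linarith
  calc q * μ.real {ω | ∑ i, X i ω ≤ n * τ}
      ≤ q * (n * q / (n * q - n * τ) ^ 2) := by
        rw [← hES]; gcongr; exact measureReal_sum_le_le hX hX01 hind hlt
    _ ≤ 3 * τ := by
        -- `q - τ ≥ 2q/3` and `nτ ≥ 1` give `3τ (nq - nτ)² ≥ (4/3) n q²`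
        have hsq : 4 * q ^ 2 ≤ 9 * (q - τ) ^ 2 := by nlinarith
        have hn0 : (0 : ℝ) ≤ n := Nat.cast_nonneg n
        rw [mul_div_assoc', div_le_iff₀ (by nlinarith)]
        nlinarith [mul_le_mul_of_nonneg_left hsq hn0,
          mul_nonneg (sub_nonneg.2 hτ) (mul_nonneg hn0 (sq_nonneg (q - τ))),
          mul_nonneg hn0 (sq_nonneg q)]

theorem mul_integral_patternLoss_le {n : ℕ} {X : Fin n → Ω → ℝ} {q τ : ℝ} (d : ℕ)
    (hτ : 1 ≤ n * τ) (hX : ∀ i, Measurable (X i)) (hX01 : ∀ i ω, X i ω = 0 ∨ X i ω = 1)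
    (hind : iIndepFun X μ) (hEX : ∀ i, μ[X i] = q) :
    q * ∫ ω, patternLoss d (n * τ) (∑ i, X i ω) ∂μ ≤ 5 * max 1 (d / (n * τ)) * min q τ := by
  have hn : 0 < n := Nat.pos_of_ne_zero fun h => by norm_num [h] at hτ
  have hτ0 : 0 < τ := pos_of_mul_pos_right (by linarith) (Nat.cast_nonneg n)
  have hX0 : ∀ i ω, 0 ≤ X i ω := fun i ω => by rcases hX01 i ω with h | h <;> simp [h]
  have hq0 : 0 ≤ q := hEX ⟨0, hn⟩ ▸ integral_nonneg (hX0 ⟨0, hn⟩)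
  have hSm : Measurable fun ω => ∑ i, X i ω := Finset.measurable_sum _ fun i _ => hX i
  have hS0 : ∀ ω, 0 ≤ ∑ i, X i ω := fun ω => sum_nonneg fun i _ => hX0 i ω
  set c := max 1 ((d : ℝ) / (n * τ))
  have hc : 1 ≤ c := le_max_left _ _
  rcases le_or_gt q τ with hqτ | hτq
  · have hle : ∫ ω, patternLoss d (n * τ) (∑ i, X i ω) ∂μ ≤ c :=
      (integral_mono (integrable_patternLoss_comp (by linarith) hSm) (integrable_const c)
        fun ω => patternLoss_le_max (by linarith)).trans (by simp)
    rw [min_eq_left hqτ]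
    nlinarith [mul_le_mul_of_nonneg_left hle hq0]
  rw [min_eq_right hτq.le]
  have hinv : n * q * ∫ ω, (∑ i, X i ω + 1)⁻¹ ∂μ ≤ 1 := by
    simpa [hEX] using sum_integral_mul_inv_sum_add_one_le_one hX hX01 hind
  have hdn : (d : ℝ) / n ≤ c * τ := by
    rw [show (d : ℝ) / n = d / (n * τ) * τ by field_simp]
    exact mul_le_mul_of_nonneg_right (le_max_right _ _) hτ0.le
  calc q * ∫ ω, patternLoss d (n * τ) (∑ i, X i ω) ∂μ
      ≤ q * (2 * d * ∫ ω, (∑ i, X i ω + 1)⁻¹ ∂μ + μ.real {ω | ∑ i, X i ω ≤ n * τ}) := by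
        gcongr; exact integral_patternLoss_comp_le hτ hSm hS0
    _ = 2 * (d / n) * (n * q * ∫ ω, (∑ i, X i ω + 1)⁻¹ ∂μ)
        + q * μ.real {ω | ∑ i, X i ω ≤ n * τ} := by
        field_simp
    _ ≤ 2 * (c * τ) * 1 + 3 * τ := by
        refine add_le_add (mul_le_mul (by linarith) hinv ?_ (by nlinarith))
          (mul_measureReal_sum_le_le hτ hX hX01 hind hEX)
        exact mul_nonneg (by positivity) (integral_nonneg fun ω => by have := hS0 ω; positivity)
    _ ≤ 5 * c * τ := by nlinarith

end BernoulliSum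

theorem ProbabilityTheory.iIndepFun.ite_eq {Ω ι β : Type*} [MeasurableSpace Ω] {μ : Measure Ω}
    [MeasurableSpace β] [MeasurableSingletonClass β] [DecidableEq β] {M : ι → Ω → β}
    (hM : iIndepFun M μ) (b : β) :
    iIndepFun (fun i ω => if M i ω = b then (1 : ℝ) else 0) μ :=
  hM.comp (fun _ x => if x = b then (1 : ℝ) else 0) fun _ =>
    Measurable.ite (measurableSet_singleton b) measurable_const measurable_const

theorem pattern_frequency_risk_bound_general (d n : ℕ) (hn : 0 < n)
    (p : (Fin d → Bool) → ℝ) (hp0 : ∀ m, 0 ≤ p m)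
    (τ : ℝ) (hτ : 1 / (n : ℝ) ≤ τ)
    {Ω : Type*} [MeasurableSpace Ω] (μ : Measure Ω) [IsProbabilityMeasure μ]
    (M : Fin n → Ω → (Fin d → Bool)) (hMmeas : ∀ i, Measurable (M i))
    (hindep : iIndepFun M μ)
    (hdist : ∀ i m, μ {ω | M i ω = m} = ENNReal.ofReal (p m)) :
    (∫ ω, ∑ m, p m *
        ((if (n : ℝ) * τ < ((Finset.univ.filter (fun i => M i ω = m)).card : ℝ)
            then (d : ℝ) / ((Finset.univ.filter (fun i => M i ω = m)).card : ℝ) else 0) +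
          (if ((Finset.univ.filter (fun i => M i ω = m)).card : ℝ) ≤ (n : ℝ) * τ
            then 1 else 0)) ∂μ) ≤
      5 * max 1 ((d : ℝ) / ((n : ℝ) * τ)) * ∑ m, min (p m) τ := by
  have hnτ : 1 ≤ (n : ℝ) * τ := by
    rwa [div_le_iff₀ (by positivity), mul_comm] at hτ
  set X : (Fin d → Bool) → Fin n → Ω → ℝ := fun m i ω => if M i ω = m then 1 else 0
  have hsets : ∀ i m, MeasurableSet {ω | M i ω = m} := fun i m =>
    hMmeas i (measurableSet_singleton m)
  have hX : ∀ m i, Measurable (X m i) := fun m i =>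
    Measurable.ite (hsets i m) measurable_const measurable_const
  have hX01 : ∀ m i ω, X m i ω = 0 ∨ X m i ω = 1 := fun m i ω => by
    by_cases h : M i ω = m <;> simp [X, h]
  have hEX : ∀ m i, μ[X m i] = p m := fun m i => by
    rw [← ENNReal.toReal_ofReal (hp0 m), ← hdist i m, ← measureReal_def,
      ← integral_indicator_one (hsets i m)]
    simp [X, Set.indicator_apply]
  have hcount : ∀ ω m, ((univ.filter fun i => M i ω = m).card : ℝ) = ∑ i, X m i ω := by
    simp [X]
  calc _ = ∑ m, p m * ∫ ω, patternLoss d (n * τ) (∑ i, X m i ω) ∂μ := by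
        simp_rw [hcount, ← integral_const_mul]
        exact integral_finsetSum _ fun m _ => (integrable_patternLoss_comp (by linarith)
          (Finset.measurable_sum _ fun i _ => hX m i)).const_mul _
    _ ≤ ∑ m, 5 * max 1 ((d : ℝ) / (n * τ)) * min (p m) τ :=
        sum_le_sum fun m _ => mul_integral_patternLoss_le d hnτ (hX m) (hX01 m)
          (hindep.ite_eq m) (hEX m)
    _ = _ := (mul_sum _ _ _).symm

/-- Key lemma on pattern frequencies: if `M_1, …, M_n` are i.i.d. with distribution `p` on
`𝓜 = {0,1}^d`, `N_m` is the number of indices `i` with `M_i = m`, and `τ ≥ 1/n`, then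
`E[∑_m p_m (d·1_{N_m > nτ}/N_m + 1_{N_m ≤ nτ})] ≤ 5·max(1, d/(nτ))·𝔠_p(τ)`. -/
theorem pattern_frequency_risk_bound (d n : ℕ) (hd : 0 < d) (hn : 0 < n)
    (p : (Fin d → Bool) → ℝ) (hp0 : ∀ m, 0 ≤ p m) (hp1 : ∑ m, p m = 1)
    (τ : ℝ) (hτ : 1 / (n : ℝ) ≤ τ)
    {Ω : Type*} [MeasurableSpace Ω] (μ : Measure Ω) [IsProbabilityMeasure μ]
    (M : Fin n → Ω → (Fin d → Bool)) (hMmeas : ∀ i, Measurable (M i))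
    (hindep : iIndepFun M μ)
    (hdist : ∀ i m, μ {ω | M i ω = m} = ENNReal.ofReal (p m)) :
    (∫ ω, ∑ m, p m *
        ((if (n : ℝ) * τ < ((Finset.univ.filter (fun i => M i ω = m)).card : ℝ)
            then (d : ℝ) / ((Finset.univ.filter (fun i => M i ω = m)).card : ℝ) else 0) +
          (if ((Finset.univ.filter (fun i => M i ω = m)).card : ℝ) ≤ (n : ℝ) * τ
            then 1 else 0)) ∂μ) ≤
      5 * max 1 ((d : ℝ) / ((n : ℝ) * τ)) * ∑ m, min (p m) τ :=
  pattern_frequency_risk_bound_general d n hn p hp0 τ hτ μ M hMmeas hindep hdist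
end

section
/- Let d and n be positive integers, ε ∈ (0,1), and let p be the homogeneous Bernoulli missing-pattern distribution on 𝓜 = {0,1}^d, i.e. p_m = ε^{|m|}·(1−ε)^{d−|m|} where |m| denotes the number of ones in m. Then for every integer s with 1 ≤ s ≤ d, 𝔠_p(d/n) ≤ (d/n + ε^s)·(e·d/s)^s; in particular 𝔠_p(d/n) ≤ inf_{1≤s≤d} (d/n + ε^s)·(e·d/s)^s. -/
/-!
Put `τ = d / n` and `q = s / d ≤ 1`. If `ε ≤ q`, every pattern `m` with `k = |m|` ones satisfies
`min(p_m, τ) ≤ q^(k - s) (τ + ε^s (1 - ε)^(d - k))`: for `k < s` the factor `q^(k - s)` is at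
least `1`, and for `k ≥ s` we have `ε^k ≤ ε^s q^(k - s)`. Summing with the binomial theorem gives
`𝔠_p(τ) ≤ (τ + ε^s) (1 + q)^d / q^s ≤ (τ + ε^s) (e d / s)^s` since `(1 + s/d)^d ≤ e^s`.
If `ε > q`, then `𝔠_p(τ) ≤ ∑ p_m = 1 ≤ (ε d / s)^s`.
-/

open Finset Real

section BernoulliPattern

variable {ι : Type*} [Fintype ι] [DecidableEq ι]

theorem sum_pow_card_filter_mul_pow {R : Type*} [CommSemiring R] (a b : R) :
    ∑ m : ι → Bool, a ^ #{j | m j} * b ^ (Fintype.card ι - #{j | m j}) =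
      (a + b) ^ Fintype.card ι := by
  have h_prod (m : ι → Bool) :
      a ^ #{j | m j} * b ^ (Fintype.card ι - #{j | m j}) = ∏ j, if m j then a else b := by
    rw [prod_ite, prod_const, prod_const, ← card_univ,
      ← card_filter_add_card_filter_not (s := univ) (fun j => m j = true), Nat.add_sub_cancel_left]
  simp_rw [h_prod, ← Fintype.prod_sum fun _ (c : Bool) => if c then a else b, Fintype.sum_bool,
    if_true, Bool.false_eq_true, if_false, prod_const, card_univ]

theorem min_pow_mul_le_div_pow_mul {ε q τ b : ℝ} (hε : 0 ≤ ε) (hεq : ε ≤ q) (hq : 0 < q)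
    (hq1 : q ≤ 1) (hτ : 0 ≤ τ) (hb : 0 ≤ b) (k s : ℕ) :
    min (ε ^ k * b) τ ≤ q ^ k / q ^ s * (τ + ε ^ s * b) := by
  rcases lt_or_ge k s with hks | hsk
  · have h_one : 1 ≤ q ^ k / q ^ s :=
      (one_le_div₀ (by positivity)).2 (pow_le_pow_of_le_one hq.le hq1 hks.le)
    calc min (ε ^ k * b) τ ≤ τ := min_le_right _ _
      _ ≤ q ^ k / q ^ s * τ := le_mul_of_one_le_left hτ h_one
      _ ≤ q ^ k / q ^ s * (τ + ε ^ s * b) := by gcongr; exact le_add_of_nonneg_right (by positivity)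
  · have h_div : q ^ k / q ^ s = q ^ (k - s) := by rw [pow_sub₀ q hq.ne' hsk, div_eq_mul_inv]
    calc min (ε ^ k * b) τ ≤ ε ^ k * b := min_le_left _ _
      _ = ε ^ (k - s) * (ε ^ s * b) := by rw [← mul_assoc, ← pow_add, Nat.sub_add_cancel hsk]
      _ ≤ q ^ (k - s) * (ε ^ s * b) := by gcongr
      _ ≤ q ^ k / q ^ s * (τ + ε ^ s * b) := by rw [h_div]; gcongr; linarith

theorem sum_min_bernoulli_le {ε q τ : ℝ} (hε : 0 ≤ ε) (hεq : ε ≤ q) (hq : 0 < q) (hq1 : q ≤ 1)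
    (hτ : 0 ≤ τ) (s : ℕ) :
    ∑ m : ι → Bool, min (ε ^ #{j | m j} * (1 - ε) ^ (Fintype.card ι - #{j | m j})) τ ≤
      (τ + ε ^ s) * (1 + q) ^ Fintype.card ι / q ^ s := by
  set n := Fintype.card ι
  have h_one_sub : 0 ≤ 1 - ε := by linarith
  have h_bound (m : ι → Bool) :
      min (ε ^ #{j | m j} * (1 - ε) ^ (n - #{j | m j})) τ ≤
        (τ * (q ^ #{j | m j} * 1 ^ (n - #{j | m j})) +
          ε ^ s * (q ^ #{j | m j} * (1 - ε) ^ (n - #{j | m j}))) / q ^ s := by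
    refine (min_pow_mul_le_div_pow_mul hε hεq hq hq1 hτ (pow_nonneg h_one_sub _) _ s).trans_eq ?_
    rw [one_pow]; ring
  calc _ ≤ _ := sum_le_sum fun m _ => h_bound m
    _ = (τ * (q + 1) ^ n + ε ^ s * (q + (1 - ε)) ^ n) / q ^ s := by
      rw [← sum_div, sum_add_distrib, ← mul_sum, ← mul_sum, sum_pow_card_filter_mul_pow,
        sum_pow_card_filter_mul_pow]
    _ ≤ (τ + ε ^ s) * (1 + q) ^ n / q ^ s := by
      rw [add_mul, add_comm q 1]
      gcongr (τ * _ + ε ^ s * ?_ ^ n) / _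
      linarith

end BernoulliPattern

theorem one_add_div_pow_le_exp {x : ℝ} (hx : 0 ≤ x) (n : ℕ) : (1 + x / n) ^ n ≤ exp x := by
  rcases n.eq_zero_or_pos with rfl | hn
  · simpa using one_le_exp hx
  calc (1 + x / n) ^ n ≤ exp (x / n) ^ n := by
        gcongr
        linarith [add_one_le_exp (x / n)]
    _ = exp x := by rw [← exp_nat_mul, mul_div_cancel₀ _ (by positivity)]

theorem complexity_bernoulli_homogeneous_general (d n : ℕ)
    (ε : ℝ) (hε0 : 0 < ε) (s : ℕ) (hs1 : 1 ≤ s) (hsd : s ≤ d) :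
    ∑ m : Fin d → Bool,
        min (ε ^ (Finset.univ.filter (fun j => m j = true)).card *
          (1 - ε) ^ (d - (Finset.univ.filter (fun j => m j = true)).card))
          ((d : ℝ) / (n : ℝ)) ≤
      ((d : ℝ) / (n : ℝ) + ε ^ s) * (Real.exp 1 * (d : ℝ) / (s : ℝ)) ^ s := by
  set τ : ℝ := d / n
  have hs : (0 : ℝ) < s := by exact_mod_cast hs1
  have hsd' : (s : ℝ) ≤ d := by exact_mod_cast hsd
  have hq : (0 : ℝ) < s / d := div_pos hs (hs.trans_le hsd')
  rcases le_or_gt ε (s / d) with hεq | hqε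
  · calc _ ≤ (τ + ε ^ s) * (1 + s / d) ^ d / (s / d) ^ s := by
          simpa only [Fintype.card_fin] using sum_min_bernoulli_le (ι := Fin d) hε0.le hεq hq
            (div_le_one_of_le₀ hsd' (by positivity)) (by positivity) s
      _ ≤ (τ + ε ^ s) * (exp 1 ^ s / (s / d) ^ s) := by
          rw [mul_div_assoc, exp_one_pow]
          gcongr
          exact one_add_div_pow_le_exp hs.le d
      _ = (τ + ε ^ s) * (exp 1 * d / s) ^ s := by rw [← div_pow, div_div_eq_mul_div]
  · have h_one : 1 < ε * d / s := by
      rw [← div_div_eq_mul_div]; exact (one_lt_div hq).2 hqε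
    calc _ ≤ ∑ m : Fin d → Bool, ε ^ #{j | m j} * (1 - ε) ^ (d - #{j | m j}) :=
          sum_le_sum fun m _ => min_le_left _ _
      _ = 1 := by simpa using sum_pow_card_filter_mul_pow (ι := Fin d) ε (1 - ε)
      _ ≤ (ε * d / s) ^ s := one_le_pow₀ h_one.le
      _ ≤ (τ + ε ^ s) * (exp 1 * d / s) ^ s := by
          rw [mul_div_assoc, mul_div_assoc, mul_pow]
          gcongr
          · exact le_add_of_nonneg_left (by positivity)
          · exact le_mul_of_one_le_left (by positivity) (one_le_exp zero_le_one)

/-- Under the homogeneous Bernoulli missing-pattern model on `𝓜 = {0,1}^d` with parameter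
`ε ∈ (0,1)` (so `p_m = ε^{|m|}(1-ε)^{d-|m|}`), for every integer `1 ≤ s ≤ d`,
`𝔠_p(d/n) ≤ (d/n + ε^s)·(e·d/s)^s`. -/
theorem complexity_bernoulli_homogeneous (d n : ℕ) (hd : 0 < d) (hn : 0 < n)
    (ε : ℝ) (hε0 : 0 < ε) (hε1 : ε < 1) (s : ℕ) (hs1 : 1 ≤ s) (hsd : s ≤ d) :
    ∑ m : Fin d → Bool,
        min (ε ^ (Finset.univ.filter (fun j => m j = true)).card *
          (1 - ε) ^ (d - (Finset.univ.filter (fun j => m j = true)).card))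
          ((d : ℝ) / (n : ℝ)) ≤
      ((d : ℝ) / (n : ℝ) + ε ^ s) * (Real.exp 1 * (d : ℝ) / (s : ℝ)) ^ s :=
  complexity_bernoulli_homogeneous_general d n ε hε0 s hs1 hsd
end

section
/- Let d be a positive integer, let ε_1, …, ε_d ∈ (0,1), and let p be the heterogeneous Bernoulli missing-pattern distribution on 𝓜 = {0,1}^d, i.e. p_m = ∏_{j=1}^{d} ε_j^{m_j}(1−ε_j)^{1−m_j}. Set ε̄ = (1/d)·∑_{j=1}^{d} ε_j, let τ ∈ (0,1), and define s = log(1/τ)/log(1/ε̄). If d·ε̄ < s < d, then 𝔠_p(τ) ≤ (e·d/s)^s · τ. -/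
lemma min_le_rpow_mul_rpow {a b t : ℝ} (ha : 0 ≤ a) (hb : 0 ≤ b)
    (ht0 : 0 ≤ t) (ht1 : t ≤ 1) : min a b ≤ a ^ t * b ^ (1 - t) := by
  rcases eq_or_lt_of_le (le_min ha hb) with h | h
  · rw [← h]
    positivity
  · have hmin : (0:ℝ) < min a b := h
    calc min a b = (min a b) ^ t * (min a b) ^ (1 - t) := by
          rw [← Real.rpow_add hmin, add_sub_cancel, Real.rpow_one]
      _ ≤ a ^ t * b ^ (1 - t) :=
          mul_le_mul (Real.rpow_le_rpow hmin.le (min_le_left _ _) ht0)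
            (Real.rpow_le_rpow hmin.le (min_le_right _ _) (by linarith))
            (Real.rpow_nonneg hmin.le _) (Real.rpow_nonneg ha _)

/-- Under the heterogeneous Bernoulli missing-pattern model on `𝓜 = {0,1}^d` with
parameters `ε_j ∈ (0,1)` (so `p_m = ∏_j ε_j^{m_j}(1-ε_j)^{1-m_j}`), with
`ε̄ = (∑_j ε_j)/d` and `s = log(1/τ)/log(1/ε̄)`, if `d·ε̄ < s < d` then
`𝔠_p(τ) ≤ (e·d/s)^s · τ`. -/
theorem complexity_bernoulli_heterogeneous (d : ℕ) (hd : 0 < d)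
    (ε : Fin d → ℝ) (hε0 : ∀ j, 0 < ε j) (hε1 : ∀ j, ε j < 1)
    (τ : ℝ) (hτ0 : 0 < τ) (hτ1 : τ < 1)
    (εbar s : ℝ) (hεbar : εbar = (∑ j, ε j) / (d : ℝ))
    (hs : s = Real.log (1 / τ) / Real.log (1 / εbar))
    (hlb : (d : ℝ) * εbar < s) (hub : s < (d : ℝ)) :
    ∑ m : Fin d → Bool,
        min (∏ j, if m j then ε j else 1 - ε j) τ ≤
      (Real.exp 1 * (d : ℝ) / s) ^ (s : ℝ) * τ := by
  have hd' : (0:ℝ) < d := by exact_mod_cast hd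
  have hεbar0 : 0 < εbar := by
    rw [hεbar]
    exact div_pos (Finset.sum_pos (fun j _ => hε0 j) ⟨⟨0, hd⟩, Finset.mem_univ _⟩) hd'
  have hs0 : 0 < s := lt_trans (by positivity) hlb
  have hεbar1 : εbar < 1 := by
    by_contra h
    push_neg at h
    have : (d:ℝ) * 1 ≤ (d:ℝ) * εbar := mul_le_mul_of_nonneg_left h hd'.le
    linarith
  have hL : 0 < Real.log (1 / εbar) := Real.log_pos (by
    rw [one_div]
    exact one_lt_inv_iff₀.mpr ⟨hεbar0, hεbar1⟩)
  have hLeq : Real.log (1 / εbar) = - Real.log εbar := by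
    rw [one_div, Real.log_inv]
  have hds1 : 1 < (d:ℝ) / s := (one_lt_div hs0).mpr hub
  set lam : ℝ := Real.log ((d:ℝ) / s) / Real.log (1 / εbar) with hlamdef
  have hlam0 : 0 < lam := div_pos (Real.log_pos hds1) hL
  have hlam1 : lam ≤ 1 := by
    rw [hlamdef, div_le_one hL]
    apply Real.log_le_log (by positivity)
    rw [div_le_div_iff₀ hs0 hεbar0, one_mul]
    linarith
  have hlamL : lam * Real.log (1 / εbar) = Real.log ((d:ℝ) / s) :=
    div_mul_cancel₀ _ hL.ne'
  -- εbar ^ lam = s / d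
  have hEl : εbar ^ lam = s / (d:ℝ) := by
    rw [Real.rpow_def_of_pos hεbar0]
    have h1 : lam * Real.log εbar = Real.log (s / (d:ℝ)) := by
      have h2 : Real.log (s / (d:ℝ)) = - Real.log ((d:ℝ) / s) := by
        rw [← Real.log_inv, inv_div]
      rw [h2, ← hlamL, hLeq]
      ring
    rw [mul_comm] at h1
    rw [h1, Real.exp_log (by positivity)]
  -- log τ = -(s * log (1/εbar))
  have hlogτ : Real.log τ = -(s * Real.log (1 / εbar)) := by
    have h1 : Real.log (1 / τ) = s * Real.log (1 / εbar) := by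
      rw [hs, div_mul_cancel₀ _ hL.ne']
    rw [one_div, Real.log_inv] at h1
    linarith
  have hpnn : ∀ m : Fin d → Bool, ∀ j, (0:ℝ) ≤ (if m j then ε j else 1 - ε j) := by
    intro m j
    split
    · exact (hε0 j).le
    · linarith [hε1 j]
  have hτr : (0:ℝ) ≤ τ ^ (1 - lam) := Real.rpow_nonneg hτ0.le _
  -- pointwise bound
  have step1 : ∑ m : Fin d → Bool, min (∏ j, if m j then ε j else 1 - ε j) τ ≤
      (∑ m : Fin d → Bool, (∏ j, if m j then ε j else 1 - ε j) ^ lam) * τ ^ (1 - lam) := by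
    rw [Finset.sum_mul]
    apply Finset.sum_le_sum
    intro m _
    exact min_le_rpow_mul_rpow (Finset.prod_nonneg fun j _ => hpnn m j) hτ0.le hlam0.le hlam1
  -- product formula
  have key : ∑ m : Fin d → Bool, (∏ j, if m j then ε j else 1 - ε j) ^ lam
      = ∏ j, ((ε j) ^ lam + (1 - ε j) ^ lam) := by
    have h1 : ∀ m : Fin d → Bool, (∏ j, if m j then ε j else 1 - ε j) ^ lam
        = ∏ j, (if m j then ε j else 1 - ε j) ^ lam := fun m =>
      (Real.finset_prod_rpow _ _ (fun j _ => hpnn m j) lam).symm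
    simp_rw [h1]
    have h2 : ∀ j : Fin d, (ε j) ^ lam + (1 - ε j) ^ lam
        = ∑ b : Bool, (if b then ε j else 1 - ε j) ^ lam := by
      intro j
      rw [Fintype.sum_bool]
      simp [add_comm]
    simp_rw [h2]
    exact (Fintype.prod_sum fun (j : Fin d) (b : Bool) => (if b then ε j else 1 - ε j) ^ lam).symm
  -- bound the product by exp
  have step2 : ∏ j, ((ε j) ^ lam + (1 - ε j) ^ lam) ≤ Real.exp (∑ j, (ε j) ^ lam) := by
    rw [Real.exp_sum]
    apply Finset.prod_le_prod
    · intro j _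
      exact add_nonneg (Real.rpow_nonneg (hε0 j).le _)
        (Real.rpow_nonneg (by linarith [hε1 j]) _)
    · intro j _
      have h1 : (1 - ε j) ^ lam ≤ 1 :=
        Real.rpow_le_one (by linarith [hε1 j]) (by linarith [hε0 j]) hlam0.le
      calc (ε j) ^ lam + (1 - ε j) ^ lam ≤ (ε j) ^ lam + 1 := by linarith
        _ ≤ Real.exp ((ε j) ^ lam) := by linarith [Real.add_one_le_exp ((ε j) ^ lam)]
  -- concavity: ∑ ε_j^lam ≤ d * εbar^lam = s
  have step3 : ∑ j, (ε j) ^ lam ≤ s := by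
    have hmean := Real.arith_mean_le_rpow_mean Finset.univ (fun _ => (d:ℝ)⁻¹)
      (fun j => (ε j) ^ lam) (fun j _ => by positivity)
      (by simp [Finset.card_univ, mul_comm]; field_simp)
      (fun j _ => Real.rpow_nonneg (hε0 j).le _) (p := 1 / lam) ((one_le_div hlam0).mpr hlam1)
    have hz : ∀ j : Fin d, ((ε j) ^ lam) ^ ((1:ℝ)/lam) = ε j := by
      intro j
      rw [← Real.rpow_mul (hε0 j).le, mul_one_div_cancel hlam0.ne', Real.rpow_one]
    simp only [hz, one_div_one_div] at hmean
    have hsum : ∑ j, (d:ℝ)⁻¹ * ε j = εbar := by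
      rw [← Finset.mul_sum, hεbar]
      ring
    rw [hsum, hEl, ← Finset.mul_sum] at hmean
    calc ∑ j, (ε j) ^ lam = (d:ℝ) * ((d:ℝ)⁻¹ * ∑ j, (ε j) ^ lam) := by
          field_simp
      _ ≤ (d:ℝ) * (s / (d:ℝ)) := mul_le_mul_of_nonneg_left hmean hd'.le
      _ = s := by field_simp
  -- final equality
  have hfinal : Real.exp s * τ ^ (1 - lam) = (Real.exp 1 * (d:ℝ) / s) ^ (s:ℝ) * τ := by
    rw [Real.rpow_def_of_pos hτ0, Real.rpow_def_of_pos (by positivity)]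
    conv_rhs => rw [← Real.exp_log hτ0]
    rw [← Real.exp_add, ← Real.exp_add]
    congr 1
    have hlog : Real.log (Real.exp 1 * (d:ℝ) / s) = 1 + Real.log ((d:ℝ) / s) := by
      rw [mul_div_assoc, Real.log_mul (Real.exp_ne_zero 1) (by positivity), Real.log_exp]
    rw [hlog, hlogτ]
    linear_combination s * hlamL
  calc ∑ m : Fin d → Bool, min (∏ j, if m j then ε j else 1 - ε j) τ
      ≤ (∑ m : Fin d → Bool, (∏ j, if m j then ε j else 1 - ε j) ^ lam) * τ ^ (1 - lam) := step1
    _ = (∏ j, ((ε j) ^ lam + (1 - ε j) ^ lam)) * τ ^ (1 - lam) := by rw [key]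
    _ ≤ Real.exp (∑ j, (ε j) ^ lam) * τ ^ (1 - lam) := mul_le_mul_of_nonneg_right step2 hτr
    _ ≤ Real.exp s * τ ^ (1 - lam) :=
        mul_le_mul_of_nonneg_right (Real.exp_le_exp.mpr step3) hτr
    _ = (Real.exp 1 * (d:ℝ) / s) ^ (s:ℝ) * τ := hfinal
end

section
/- Let d and h be positive integers, let P^{(1)}, …, P^{(h)} ∈ {0,1}^d be fixed missing patterns, and let H ∈ {1,…,h} and N ∈ {0,1}^d be independent random variables, where N has distribution p_N on {0,1}^d. Define the random missing pattern M ∈ {0,1}^d componentwise by 1 − M_j = (1 − P^{(H)}_j)·(1 − N_j) for j = 1,…,d, and let p denote the distribution of M. Then for every τ ∈ (0,1], 𝔠_p(τ) ≤ h · 𝔠_{p_N}(τ). -/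
open MeasureTheory ProbabilityTheory

lemma min_sum_le_aux {ι : Type*} (s : Finset ι) (a : ι → ℝ) (τ : ℝ)
    (ha : ∀ i ∈ s, 0 ≤ a i) (hτ : 0 ≤ τ) :
    min (∑ i ∈ s, a i) τ ≤ ∑ i ∈ s, min (a i) τ := by
  by_cases hall : ∀ i ∈ s, a i ≤ τ
  · calc min (∑ i ∈ s, a i) τ ≤ ∑ i ∈ s, a i := min_le_left _ _
      _ = ∑ i ∈ s, min (a i) τ :=
        Finset.sum_congr rfl fun i hi => (min_eq_left (hall i hi)).symm
  · push_neg at hall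
    obtain ⟨j, hj, hja⟩ := hall
    calc min (∑ i ∈ s, a i) τ ≤ τ := min_le_right _ _
      _ = min (a j) τ := (min_eq_right hja.le).symm
      _ ≤ ∑ i ∈ s, min (a i) τ :=
        Finset.single_le_sum (fun i hi => le_min (ha i hi) hτ) hj

/-- Database-merge model: `H ∈ {1,…,h}` (the source) and `N ∈ {0,1}^d` (the measurement
failures) are independent, `N` has distribution `p_N`, and the missing pattern `M` is given
componentwise by `1 − M_j = (1 − P^{(H)}_j)(1 − N_j)`, i.e. `M_j = P^{(H)}_j ∨ N_j`.
Then the distribution `p` of `M` satisfies `𝔠_p(τ) ≤ h·𝔠_{p_N}(τ)` for all `τ ∈ (0,1]`. -/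
theorem complexity_database_merge (d h : ℕ) (hd : 0 < d) (hh : 0 < h)
    (P : Fin h → Fin d → Bool)
    {Ω : Type*} [MeasurableSpace Ω] (μ : Measure Ω) [IsProbabilityMeasure μ]
    (H : Ω → Fin h) (N : Ω → Fin d → Bool)
    (hHmeas : Measurable H) (hNmeas : Measurable N)
    (hindep : IndepFun H N μ)
    (pN : (Fin d → Bool) → ℝ) (hpN0 : ∀ ν, 0 ≤ pN ν) (hpN1 : ∑ ν, pN ν = 1)
    (hNdist : ∀ ν, μ {ω | N ω = ν} = ENNReal.ofReal (pN ν))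
    (τ : ℝ) (hτ0 : 0 < τ) (hτ1 : τ ≤ 1) :
    ∑ m : Fin d → Bool,
        min ((μ {ω | (fun j => P (H ω) j || N ω j) = m}).toReal) τ ≤
      (h : ℝ) * ∑ ν, min (pN ν) τ := by
  classical
  set g : Fin h × (Fin d → Bool) → (Fin d → Bool) := fun p j => P p.1 j || p.2 j with hgdef
  set A : Fin h × (Fin d → Bool) → Set Ω := fun p => {ω | H ω = p.1 ∧ N ω = p.2} with hAdef
  have hmeasA : ∀ p, MeasurableSet (A p) := fun p =>
    (hHmeas (measurableSet_singleton p.1)).inter (hNmeas (measurableSet_singleton p.2))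
  -- decomposition of the measure of {F = m}
  have key : ∀ m : Fin d → Bool,
      μ {ω | (fun j => P (H ω) j || N ω j) = m}
        = ∑ p ∈ Finset.univ.filter (fun p => g p = m), μ (A p) := by
    intro m
    rw [← measure_biUnion_finset]
    · congr 1
      ext ω
      simp only [Set.mem_iUnion, Finset.mem_filter, Finset.mem_univ, true_and,
        Set.mem_setOf_eq, A, g]
      constructor
      · intro hm
        exact ⟨(H ω, N ω), hm, rfl, rfl⟩
      · rintro ⟨⟨k, ν⟩, hk, h1, h2⟩
        simp only at h1 h2
        subst h1; subst h2; exact hk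
    · intro p hp q hq hpq
      simp only [Function.onFun, Set.disjoint_left]
      intro ω hω hω'
      apply hpq
      have : p = (H ω, N ω) := by
        obtain ⟨h1, h2⟩ := hω; exact Prod.ext h1.symm h2.symm
      have : q = (H ω, N ω) := by
        obtain ⟨h1, h2⟩ := hω'; exact Prod.ext h1.symm h2.symm
      simp_all
    · exact fun p _ => hmeasA p
  -- bound each fiber term by pN
  have hbound : ∀ p : Fin h × (Fin d → Bool), (μ (A p)).toReal ≤ pN p.2 := by
    intro p
    have hsub : A p ⊆ {ω | N ω = p.2} := fun ω hω => hω.2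
    have this : μ (A p) ≤ μ {ω | N ω = p.2} := measure_mono hsub
    rw [hNdist p.2] at this
    calc (μ (A p)).toReal ≤ (ENNReal.ofReal (pN p.2)).toReal :=
          ENNReal.toReal_mono ENNReal.ofReal_ne_top this
      _ = pN p.2 := ENNReal.toReal_ofReal (hpN0 p.2)
  have step1 : ∀ m : Fin d → Bool,
      min ((μ {ω | (fun j => P (H ω) j || N ω j) = m}).toReal) τ
        ≤ ∑ p ∈ Finset.univ.filter (fun p => g p = m), min (pN p.2) τ := by
    intro m
    rw [key m, ENNReal.toReal_sum (fun p _ => measure_ne_top μ _)]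
    refine le_trans (min_sum_le_aux _ _ _ (fun p _ => ENNReal.toReal_nonneg) hτ0.le) ?_
    exact Finset.sum_le_sum fun p _ => min_le_min (hbound p) le_rfl
  calc ∑ m : Fin d → Bool,
        min ((μ {ω | (fun j => P (H ω) j || N ω j) = m}).toReal) τ
      ≤ ∑ m : Fin d → Bool, ∑ p ∈ Finset.univ.filter (fun p => g p = m),
          min (pN p.2) τ := Finset.sum_le_sum fun m _ => step1 m
    _ = ∑ p : Fin h × (Fin d → Bool), min (pN p.2) τ :=
        Finset.sum_fiberwise Finset.univ g (fun p => min (pN p.2) τ)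
    _ = (h : ℝ) * ∑ ν, min (pN ν) τ := by
        rw [Fintype.sum_prod_type]
        simp [Finset.sum_const, Finset.card_univ]
end

section
/- Let λ > 0 and R > 0, let Π = N(0, λ²) be the centered Gaussian probability measure on ℝ with variance λ², and for u ∈ ℝ denote the clipping T_R u = max(−R, min(R, u)). Then for every a ∈ ℝ with |a| ≤ R, | ∫_ℝ (a − μ)² dΠ(μ) − ∫_ℝ (a − T_R μ)² dΠ(μ) | ≤ 16·λ²·exp(−R²/(4λ²)). -/
open MeasureTheory ProbabilityTheory Real
open scoped NNReal

/-!
The two integrands agree on `[-R, R]`, and outside it their difference is at most `3 x²`, hence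
at most `3 e^{-R²/(4λ²)} x² e^{x²/(4λ²)}`. Tilting `N(0, λ²)` by `e^{x²/(4λ²)}` gives `√2 · N(0, 2λ²)`,
whose second moment is `2λ²`, so the difference of the integrals is at most
`6√2 λ² e^{-R²/(4λ²)}`.
-/

lemma abs_sq_sub_sq_clip_le_three_mul_sq {a R x : ℝ} (ha : |a| ≤ R) :
    |(a - x) ^ 2 - (a - max (-R) (min R x)) ^ 2| ≤ 3 * x ^ 2 := by
  obtain ⟨haR, hRa⟩ := abs_le.mp ha
  rcases le_total x (-R) with hx | hx
  · rw [min_eq_right (by linarith), max_eq_left hx, abs_le]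
    constructor <;> nlinarith
  rcases le_total x R with hx' | hx'
  · rw [min_eq_right hx', max_eq_right hx, sub_self, abs_zero]
    positivity
  · rw [min_eq_left hx', max_eq_right (by linarith), abs_le]
    constructor <;> nlinarith

lemma abs_sq_sub_sq_clip_le {a R s : ℝ} (ha : |a| ≤ R) (hs : 0 ≤ s) (x : ℝ) :
    |(a - x) ^ 2 - (a - max (-R) (min R x)) ^ 2| ≤
      3 * exp (-R ^ 2 / s) * (x ^ 2 * exp (x ^ 2 / s)) := by
  rcases le_or_gt |x| R with hx | hx
  · obtain ⟨hRx, hxR⟩ := abs_le.mp hx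
    rw [min_eq_right hxR, max_eq_right hRx, sub_self, abs_zero]
    positivity
  · have hR2 : R ^ 2 ≤ x ^ 2 := by
      simpa only [sq_abs] using pow_le_pow_left₀ ((abs_nonneg a).trans ha) hx.le 2
    have hweight : 1 ≤ exp (-R ^ 2 / s) * exp (x ^ 2 / s) := by
      rw [← exp_add, ← add_div]
      exact one_le_exp (div_nonneg (by linarith) hs)
    calc |(a - x) ^ 2 - (a - max (-R) (min R x)) ^ 2| ≤ 3 * x ^ 2 :=
          abs_sq_sub_sq_clip_le_three_mul_sq ha
      _ ≤ 3 * x ^ 2 * (exp (-R ^ 2 / s) * exp (x ^ 2 / s)) :=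
          le_mul_of_one_le_right (by positivity) hweight
      _ = _ := by ring

lemma gaussianPDFReal_zero_mul_exp_sq_div {v : ℝ≥0} (hv : v ≠ 0) (x : ℝ) :
    gaussianPDFReal 0 v x * exp (x ^ 2 / (4 * v)) = √2 * gaussianPDFReal 0 (2 * v) x := by
  have hv' : (0 : ℝ) < v := by positivity
  simp only [gaussianPDFReal, sub_zero, NNReal.coe_mul, NNReal.coe_ofNat]
  rw [show (2 * π * (2 * (v : ℝ))) = 2 * (2 * π * v) by ring, Real.sqrt_mul zero_le_two]
  have : x ^ 2 / (4 * v) = -x ^ 2 / (2 * (2 * v)) - -x ^ 2 / (2 * v) := by field_simp; ring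
  rw [this, exp_sub]
  field_simp

lemma integrable_gaussianReal_iff {μ : ℝ} {v : ℝ≥0} (hv : v ≠ 0) {f : ℝ → ℝ} :
    Integrable f (gaussianReal μ v) ↔ Integrable (fun x => gaussianPDFReal μ v x * f x) := by
  rw [gaussianReal_of_var_ne_zero _ hv, integrable_withDensity_iff_integrable_smul'
    (measurable_gaussianPDF _ _) (ae_of_all _ fun _ => gaussianPDF_lt_top)]
  simp [gaussianPDF, ENNReal.toReal_ofReal (gaussianPDFReal_nonneg _ _ _)]

lemma integral_sq_gaussianReal (v : ℝ≥0) : ∫ x, x ^ 2 ∂gaussianReal 0 v = v := by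
  rw [← variance_fun_id_gaussianReal (μ := 0), variance_eq_integral measurable_id'.aemeasurable]
  simp [integral_id_gaussianReal]

lemma integrable_mul_exp_sq_div_gaussianReal {v : ℝ≥0} (hv : v ≠ 0) {g : ℝ → ℝ}
    (hg : Integrable g (gaussianReal 0 (2 * v))) :
    Integrable (fun x => g x * exp (x ^ 2 / (4 * v))) (gaussianReal 0 v) := by
  rw [integrable_gaussianReal_iff (mul_ne_zero two_ne_zero hv)] at hg
  rw [integrable_gaussianReal_iff hv]
  refine (hg.const_mul √2).congr (ae_of_all _ fun x => ?_)
  linear_combination (-g x) * gaussianPDFReal_zero_mul_exp_sq_div hv x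

lemma integral_mul_exp_sq_div_gaussianReal {v : ℝ≥0} (hv : v ≠ 0) (g : ℝ → ℝ) :
    ∫ x, g x * exp (x ^ 2 / (4 * v)) ∂gaussianReal 0 v = √2 * ∫ x, g x ∂gaussianReal 0 (2 * v) := by
  rw [integral_gaussianReal_eq_integral_smul hv,
    integral_gaussianReal_eq_integral_smul (mul_ne_zero two_ne_zero hv), ← integral_const_mul]
  congr 1 with x
  simp only [smul_eq_mul]
  linear_combination g x * gaussianPDFReal_zero_mul_exp_sq_div hv x

lemma abs_integral_sq_sub_integral_sq_clip_le {v : ℝ≥0} (hv : v ≠ 0) {a R : ℝ} (ha : |a| ≤ R) :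
    |(∫ x, (a - x) ^ 2 ∂gaussianReal 0 v) -
        ∫ x, (a - max (-R) (min R x)) ^ 2 ∂gaussianReal 0 v| ≤
      6 * √2 * v * exp (-R ^ 2 / (4 * v)) := by
  set bound : ℝ → ℝ := fun x => 3 * exp (-R ^ 2 / (4 * v)) * (x ^ 2 * exp (x ^ 2 / (4 * v)))
  have hbound : ∀ x, |(a - x) ^ 2 - (a - max (-R) (min R x)) ^ 2| ≤ bound x :=
    abs_sq_sub_sq_clip_le ha (by positivity)
  have hbound_int : Integrable bound (gaussianReal 0 v) :=
    (integrable_mul_exp_sq_div_gaussianReal hv (memLp_id_gaussianReal 2).integrable_sq).const_mul _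
  have hsq_int : Integrable (fun x => (a - x) ^ 2) (gaussianReal 0 v) :=
    ((memLp_const a).sub (memLp_id_gaussianReal 2)).integrable_sq
  have hdiff_int : Integrable (fun x => (a - x) ^ 2 - (a - max (-R) (min R x)) ^ 2)
      (gaussianReal 0 v) :=
    hbound_int.mono' (by fun_prop) (ae_of_all _ fun x => (norm_eq_abs _).trans_le (hbound x))
  have hclip_int : Integrable (fun x => (a - max (-R) (min R x)) ^ 2) (gaussianReal 0 v) :=
    (hsq_int.sub hdiff_int).congr (ae_of_all _ fun x => sub_sub_cancel _ _)
  calc _ = |∫ x, (a - x) ^ 2 - (a - max (-R) (min R x)) ^ 2 ∂gaussianReal 0 v| := by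
        rw [integral_sub hsq_int hclip_int]
    _ ≤ ∫ x, bound x ∂gaussianReal 0 v :=
        (abs_integral_le_integral_abs).trans (integral_mono hdiff_int.abs hbound_int hbound)
    _ = 6 * √2 * v * exp (-R ^ 2 / (4 * v)) := by
        simp only [bound, integral_const_mul, integral_mul_exp_sq_div_gaussianReal hv,
          integral_sq_gaussianReal, NNReal.coe_mul, NNReal.coe_ofNat]
        ring

theorem gaussian_clipping_comparison_general (lam R : ℝ) (hlam : 0 < lam)
    (a : ℝ) (ha : |a| ≤ R) :
    |(∫ x, (a - x) ^ 2 ∂(gaussianReal 0 ⟨lam ^ 2, sq_nonneg lam⟩)) -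
        ∫ x, (a - max (-R) (min R x)) ^ 2 ∂(gaussianReal 0 ⟨lam ^ 2, sq_nonneg lam⟩)| ≤
      16 * lam ^ 2 * Real.exp (-R ^ 2 / (4 * lam ^ 2)) := by
  set v : ℝ≥0 := ⟨lam ^ 2, sq_nonneg lam⟩
  have hv : v ≠ 0 := NNReal.coe_ne_zero.mp (pow_pos hlam 2).ne'
  refine (abs_integral_sq_sub_integral_sq_clip_le hv ha).trans ?_
  change 6 * √2 * lam ^ 2 * exp (-R ^ 2 / (4 * lam ^ 2)) ≤ _
  have hsqrt2 : √2 ≤ 2 := Real.sqrt_le_iff.mpr ⟨zero_le_two, by norm_num⟩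
  gcongr
  linarith

/-- Clipping-comparison lemma: for the Gaussian measure `Π = N(0, λ²)` on `ℝ`, `R > 0`,
and any `a` with `|a| ≤ R`, denoting `T_R u = max(−R, min(R, u))`,
`|∫ (a − μ)² dΠ(μ) − ∫ (a − T_R μ)² dΠ(μ)| ≤ 16·λ²·exp(−R²/(4λ²))`. -/
theorem gaussian_clipping_comparison (lam R : ℝ) (hlam : 0 < lam) (hR : 0 < R)
    (a : ℝ) (ha : |a| ≤ R) :
    |(∫ x, (a - x) ^ 2 ∂(gaussianReal 0 ⟨lam ^ 2, sq_nonneg lam⟩)) -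
        ∫ x, (a - max (-R) (min R x)) ^ 2 ∂(gaussianReal 0 ⟨lam ^ 2, sq_nonneg lam⟩)| ≤
      16 * lam ^ 2 * Real.exp (-R ^ 2 / (4 * lam ^ 2)) :=
  gaussian_clipping_comparison_general lam R hlam a ha
end
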